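/- The Griesmer bound for the Hamming metric: if C is a linear [n, k, d]_q code over F_q with k ≥ 1 and minimum Hamming distance d, then n ≥ ∑_{i=0}^{k-1} ⌈d / q^i⌉. -/
import Mathlib

open Finset

private lemma myCeilDiv_le_iff {d m t : ℕ} (hm : 0 < m) : d ⌈/⌉ m ≤ t ↔ d ≤ m * t := by
  rw [ceilDiv_le_iff_le_smul hm, smul_eq_mul]

private lemma myCeilDiv_mono {d d' : ℕ} (h : d ≤ d') (m : ℕ) : d ⌈/⌉ m ≤ d' ⌈/⌉ m := by
  rcases Nat.eq_zero_or_pos m with hm | hm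
  · simp [hm]
  · rw [myCeilDiv_le_iff hm]
    exact h.trans (by simpa [smul_eq_mul] using le_smul_ceilDiv (b := d') hm)

private lemma myCeilDiv_ceilDiv (d a b : ℕ) (ha : 0 < a) (hb : 0 < b) :
    (d ⌈/⌉ a) ⌈/⌉ b = d ⌈/⌉ (a * b) := by
  apply le_antisymm
  · rw [myCeilDiv_le_iff hb, myCeilDiv_le_iff ha, ← mul_assoc]
    exact (by simpa [smul_eq_mul] using le_smul_ceilDiv (b := d) (Nat.mul_pos ha hb))
  · rw [myCeilDiv_le_iff (Nat.mul_pos ha hb), mul_assoc, ← myCeilDiv_le_iff ha,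
      ← myCeilDiv_le_iff hb]

private lemma myIntCeil_eq (d m : ℕ) (hm : 0 < m) :
    ⌈(d : ℚ) / (m : ℚ)⌉ = ((d ⌈/⌉ m : ℕ) : ℤ) := by
  have hm' : (0 : ℚ) < m := by exact_mod_cast hm
  apply le_antisymm
  · rw [Int.ceil_le, div_le_iff₀ hm']
    have h : d ≤ m * (d ⌈/⌉ m) := by
      simpa [smul_eq_mul] using le_smul_ceilDiv (b := d) hm
    calc (d : ℚ) ≤ ((m * (d ⌈/⌉ m) : ℕ) : ℚ) := by exact_mod_cast h
      _ = ((d ⌈/⌉ m : ℕ) : ℚ) * m := by push_cast; ring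
  · have h0 : (0 : ℤ) ≤ ⌈(d : ℚ) / (m : ℚ)⌉ := by positivity
    have h1 : (d : ℚ) / m ≤ (⌈(d : ℚ) / (m : ℚ)⌉.toNat : ℚ) := by
      refine (Int.le_ceil _).trans ?_
      exact_mod_cast Int.self_le_toNat _
    have h2 : d ≤ m * ⌈(d : ℚ) / (m : ℚ)⌉.toNat := by
      have h3 := (div_le_iff₀ hm').mp h1
      have h4 : (d : ℚ) ≤ ((m * ⌈(d : ℚ) / (m : ℚ)⌉.toNat : ℕ) : ℚ) := by
        refine h3.trans_eq ?_; push_cast; ring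
      exact_mod_cast h4
    have h5 := (myCeilDiv_le_iff hm).mpr h2
    omega

section Key

variable {F : Type*} [Field F] [Fintype F] [DecidableEq F]

private lemma count_col (a b : F) (hb : b ≠ 0) :
    #{α : F | a - α * b ≠ 0} = Fintype.card F - 1 := by
  have h1 : ({α : F | a - α * b = 0} : Finset F) = {a / b} := by
    ext α
    simp only [Finset.mem_filter, Finset.mem_univ, true_and, Finset.mem_singleton,
      sub_eq_zero]
    rw [eq_comm (a := a), eq_div_iff hb]
  have h2 := Finset.card_filter_add_card_filter_not
    (s := (Finset.univ : Finset F)) (p := fun α => a - α * b = 0)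
  simp only [h1, Finset.card_singleton, Finset.card_univ] at h2
  have h3 : #{α : F | ¬ (a - α * b = 0)} = Fintype.card F - 1 := by omega
  convert h3 using 2

private lemma count_key {ι : Type} [Fintype ι] (c x : ι → F) :
    ∑ α : F, hammingNorm (x - α • c) =
      (Fintype.card F - 1) * hammingNorm c +
        Fintype.card F * #{i | c i = 0 ∧ x i ≠ 0} := by
  calc ∑ α : F, hammingNorm (x - α • c)
      = ∑ α : F, ∑ i : ι, (if x i - α * c i ≠ 0 then 1 else 0) := by
        refine Finset.sum_congr rfl fun α _ => ?_
        rw [hammingNorm, Finset.card_filter]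
        rfl
    _ = ∑ i : ι, ∑ α : F, (if x i - α * c i ≠ 0 then 1 else 0) := Finset.sum_comm
    _ = ∑ i : ι, (if c i ≠ 0 then Fintype.card F - 1
            else (if x i ≠ 0 then Fintype.card F else 0)) := by
        refine Finset.sum_congr rfl fun i _ => ?_
        by_cases hci : c i = 0
        · by_cases hxi : x i = 0 <;> simp [hci, hxi, Finset.card_univ]
        · rw [if_pos hci, ← count_col (x i) (c i) hci, Finset.card_filter]
    _ = (Fintype.card F - 1) * hammingNorm c +
          Fintype.card F * #{i | c i = 0 ∧ x i ≠ 0} := by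
        rw [Finset.sum_ite, Finset.sum_const, Finset.sum_ite, Finset.sum_const,
          Finset.sum_const_zero, add_zero, smul_eq_mul, smul_eq_mul,
          Finset.filter_filter, hammingNorm]
        simp only [not_not, mul_comm]

private lemma weight_bound {ι : Type} [Fintype ι] {C : Submodule F (ι → F)}
    {d' : ℕ} (hmin : ∀ y ∈ C, y ≠ 0 → d' ≤ hammingNorm y)
    {c : ι → F} (hc : c ∈ C) (hcd : hammingNorm c = d')
    {x : ι → F} (hx : x ∈ C) (hxc : ∀ α : F, x - α • c ≠ 0) :
    d' ≤ Fintype.card F * #{i | c i = 0 ∧ x i ≠ 0} := by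
  have hq : 1 ≤ Fintype.card F := Fintype.card_pos
  have h1 : Fintype.card F * d' ≤ ∑ α : F, hammingNorm (x - α • c) := by
    have := Finset.card_nsmul_le_sum (Finset.univ : Finset F)
      (fun α => hammingNorm (x - α • c)) d'
      (fun α _ => hmin _ (Submodule.sub_mem C hx (Submodule.smul_mem C α hc)) (hxc α))
    simpa [Finset.card_univ, smul_eq_mul, mul_comm] using this
  rw [count_key, hcd] at h1
  have h2 : (Fintype.card F - 1) * d' + d' = Fintype.card F * d' := by
    cases' Nat.exists_eq_add_of_le hq with r hr
    rw [hr, Nat.add_sub_cancel_left]; ring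
  omega

private lemma norm_res {ι : Type} [Fintype ι] (c x : ι → F) :
    hammingNorm ((LinearMap.funLeft F F
        (Subtype.val : {j // c j = 0} → ι)) x) = #{i | c i = 0 ∧ x i ≠ 0} := by
  rw [hammingNorm, ← Fintype.card_subtype, ← Fintype.card_subtype]
  exact Fintype.card_congr
    ((Equiv.subtypeSubtypeEquivSubtypeInter (fun j => c j = 0) (fun j => x j ≠ 0)))

private lemma griesmer_aux :
    ∀ (k : ℕ) (ι : Type) [Fintype ι] [DecidableEq ι] (d : ℕ), 0 < d →
      ∀ C : Submodule F (ι → F), k ≤ Module.finrank F C →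
      (∀ c ∈ C, c ≠ 0 → d ≤ hammingNorm c) →
      ∑ i ∈ Finset.range k, d ⌈/⌉ (Fintype.card F) ^ i ≤ Fintype.card ι := by
  intro k
  induction k with
  | zero => intro ι _ _ d _ C _ _; simp
  | succ k IH =>
    intro ι _ _ d hd C hdim hmin
    have hq : 1 < Fintype.card F := Fintype.one_lt_card
    have hqpos : 0 < Fintype.card F := by omega
    -- choose a minimal weight nonzero codeword
    have hCbot : C ≠ ⊥ := by
      intro h
      rw [h, finrank_bot] at hdim
      omega
    obtain ⟨x0, hx0C, hx0⟩ := Submodule.exists_mem_ne_zero_of_ne_bot hCbot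
    have hSne : {m | ∃ y ∈ C, y ≠ 0 ∧ hammingNorm y = m}.Nonempty :=
      ⟨_, x0, hx0C, hx0, rfl⟩
    set d' := sInf {m | ∃ y ∈ C, y ≠ 0 ∧ hammingNorm y = m} with hd'def
    obtain ⟨c, hcC, hc0, hcd⟩ : ∃ y ∈ C, y ≠ 0 ∧ hammingNorm y = d' := Nat.sInf_mem hSne
    have hmin' : ∀ y ∈ C, y ≠ 0 → d' ≤ hammingNorm y := fun y hy hy0 =>
      Nat.sInf_le ⟨y, hy, hy0, rfl⟩
    have hdd' : d ≤ d' := hcd ▸ hmin c hcC hc0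
    have hd'pos : 0 < d' := lt_of_lt_of_le hd hdd'
    -- residual projection
    set π := LinearMap.funLeft F F (Subtype.val : {j // c j = 0} → ι) with hπdef
    have hπc : π c = 0 := funext fun i => i.2
    set φ := π.comp C.subtype with hφdef
    -- kernel of φ is contained in the span of c
    have hker : LinearMap.ker φ ≤ Submodule.span F {(⟨c, hcC⟩ : C)} := by
      intro v hv
      by_contra hvs
      have hxc : ∀ α : F, (v : ι → F) - α • c ≠ 0 := by
        intro α h
        apply hvs
        have hveq : v = α • (⟨c, hcC⟩ : C) := by
          apply Subtype.ext
          rw [sub_eq_zero] at h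
          exact h
        rw [hveq]
        exact Submodule.smul_mem _ _ (Submodule.mem_span_singleton_self _)
      have hwb := weight_bound hmin' hcC hcd v.2 hxc
      have hφv : π (v : ι → F) = 0 := hv
      have hres : #{i | c i = 0 ∧ (v : ι → F) i ≠ 0} = 0 := by
        rw [← norm_res c (v : ι → F), hφv, hammingNorm_zero]
      rw [hres, mul_zero] at hwb
      omega
    -- rank of the residual code
    have hrank := LinearMap.finrank_range_add_finrank_ker φ
    have hker1 : Module.finrank F (LinearMap.ker φ) ≤ 1 := by
      have h1 : Module.finrank F (Submodule.span F {(⟨c, hcC⟩ : C)}) = 1 :=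
        finrank_span_singleton (by simpa using hc0)
      exact h1 ▸ Submodule.finrank_mono hker
    have hrangeeq : LinearMap.range φ = Submodule.map π C := by
      rw [hφdef, LinearMap.range_comp, Submodule.range_subtype]
    have hrange : k ≤ Module.finrank F (Submodule.map π C) := by
      rw [← hrangeeq]; omega
    -- min weight of the residual code
    have hmin'' : ∀ y ∈ Submodule.map π C, y ≠ 0 →
        d' ⌈/⌉ Fintype.card F ≤ hammingNorm y := by
      rintro _ ⟨x, hxC, rfl⟩ hy0
      have hxc : ∀ α : F, x - α • c ≠ 0 := by
        intro α h
        apply hy0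
        rw [sub_eq_zero] at h
        rw [h, map_smul, hπc, smul_zero]
      have hw := weight_bound hmin' hcC hcd hxC hxc
      rw [myCeilDiv_le_iff hqpos]
      calc d' ≤ Fintype.card F * #{i | c i = 0 ∧ x i ≠ 0} := hw
        _ = Fintype.card F * hammingNorm (π x) := by rw [norm_res]
    have hd1pos : 0 < d' ⌈/⌉ Fintype.card F := by
      by_contra h
      have h0 : d' ⌈/⌉ Fintype.card F ≤ 0 := by omega
      rw [myCeilDiv_le_iff hqpos] at h0
      omega
    -- apply the induction hypothesis
    have hIH := IH {j // c j = 0} (d' ⌈/⌉ Fintype.card F) hd1pos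
      (Submodule.map π C) hrange hmin''
    -- card of the residual index type
    have hwtle : d' ≤ Fintype.card ι := by
      rw [← hcd, hammingNorm]
      exact (Finset.card_filter_le _ _).trans_eq (Finset.card_univ)
    have hcard : Fintype.card {j // c j = 0} = Fintype.card ι - d' := by
      rw [Fintype.card_subtype]
      have h := Finset.card_filter_add_card_filter_not
        (s := (Finset.univ : Finset ι)) (p := fun j => c j = 0)
      have h2 : #{j | ¬ c j = 0} = d' := by
        rw [← hcd, hammingNorm]
      rw [Finset.card_univ] at h
      omega
    rw [hcard] at hIH
    -- combine
    calc ∑ i ∈ Finset.range (k + 1), d ⌈/⌉ (Fintype.card F) ^ i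
        ≤ ∑ i ∈ Finset.range (k + 1), d' ⌈/⌉ (Fintype.card F) ^ i :=
          Finset.sum_le_sum fun i _ => myCeilDiv_mono hdd' _
      _ = (∑ i ∈ Finset.range k, d' ⌈/⌉ (Fintype.card F) ^ (i + 1)) +
            d' ⌈/⌉ (Fintype.card F) ^ 0 := Finset.sum_range_succ' _ _
      _ = (∑ i ∈ Finset.range k, (d' ⌈/⌉ Fintype.card F) ⌈/⌉ (Fintype.card F) ^ i) + d' := by
          rw [pow_zero, ceilDiv_one]
          congr 1
          refine Finset.sum_congr rfl fun i _ => ?_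
          rw [myCeilDiv_ceilDiv _ _ _ hqpos (pow_pos hqpos i), ← pow_succ']
      _ ≤ (Fintype.card ι - d') + d' := by omega
      _ = Fintype.card ι := by omega

end Key

/-- Griesmer bound: if `C` is a linear `[n, k, d]_q` code over a finite field `F` with
`q = |F|` elements, `k ≥ 1`, and minimum Hamming distance `d`, then
`n ≥ ∑_{i=0}^{k-1} ⌈d / q^i⌉`. -/
theorem stmt_3 (F : Type*) [Field F] [Fintype F] [DecidableEq F] (n k d : ℕ) (hk : 1 ≤ k)
    (C : Submodule F (Fin n → F)) (hdim : Module.finrank F C = k)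
    (hmin : ∀ c ∈ C, c ≠ 0 → d ≤ hammingNorm c)
    (hex : ∃ c ∈ C, c ≠ 0 ∧ hammingNorm c = d) :
    (∑ i ∈ Finset.range k, ⌈(d : ℚ) / (Fintype.card F : ℚ) ^ i⌉) ≤ (n : ℤ) := by
  obtain ⟨c, hcC, hc0, hcd⟩ := hex
  have hd : 0 < d := by
    rcases Nat.eq_zero_or_pos d with h | h
    · exfalso
      apply hc0
      rw [← hammingNorm_eq_zero, hcd, h]
    · exact h
  have haux := griesmer_aux k (Fin n) d hd C (le_of_eq hdim.symm) hmin
  have hcast : ∀ i : ℕ, ⌈(d : ℚ) / (Fintype.card F : ℚ) ^ i⌉ =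
      ((d ⌈/⌉ (Fintype.card F) ^ i : ℕ) : ℤ) := by
    intro i
    have := myIntCeil_eq d ((Fintype.card F) ^ i) (pow_pos Fintype.card_pos i)
    rw [← this]
    norm_cast
  calc ∑ i ∈ Finset.range k, ⌈(d : ℚ) / (Fintype.card F : ℚ) ^ i⌉
      = ∑ i ∈ Finset.range k, ((d ⌈/⌉ (Fintype.card F) ^ i : ℕ) : ℤ) :=
        Finset.sum_congr rfl fun i _ => hcast i
    _ = ((∑ i ∈ Finset.range k, d ⌈/⌉ (Fintype.card F) ^ i : ℕ) : ℤ) := by push_cast; rfl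
    _ ≤ ((Fintype.card (Fin n) : ℕ) : ℤ) := by exact_mod_cast haux
    _ = (n : ℤ) := by rw [Fintype.card_fin]
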